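/- Let (B_i)_{i ∈ I} be a family of posets each with a quasi-complete unary operation f_i (preserving suprema of nonempty sets), and let F be an ultrafilter on I. Then the induced unary operation on the ultraproduct ∏ B_i / F is quasi-complete. -/
import Mathlib


/-- The setoid on the product `∀ i, B i` identifying families that agree on a set
in the ultrafilter `F`. -/
def uSetoid {I : Type*} (B : I → Type*) (F : Ultrafilter I) : Setoid (∀ i, B i) where
  r a b := {i | a i = b i} ∈ F
  iseqv := by
    refine ⟨fun a => ?_, fun h => ?_, fun h1 h2 => ?_⟩
    · exact Filter.univ_mem' fun i => rfl
    · filter_upwards [h] with i hi using hi.symm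
    · filter_upwards [h1, h2] with i hi1 hi2 using hi1.trans hi2

/-- The ultraproduct `∏ B_i / F`. -/
def UProd {I : Type*} (B : I → Type*) (F : Ultrafilter I) : Type _ :=
  Quotient (uSetoid B F)

/-- The ultraproduct partial order: `(a_i)/F ≤ (b_i)/F` iff `{i : a_i ≤ b_i} ∈ F`. -/
instance UProd.instPartialOrder {I : Type*} (B : I → Type*) [∀ i, PartialOrder (B i)]
    (F : Ultrafilter I) : PartialOrder (UProd B F) where
  le := Quotient.lift₂ (fun a b => {i | a i ≤ b i} ∈ F) (by
    intro a₁ b₁ a₂ b₂ h₁ h₂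
    refine propext ⟨fun h => ?_, fun h => ?_⟩
    · filter_upwards [h, h₁, h₂] with i hi e₁ e₂ using e₁ ▸ e₂ ▸ hi
    · filter_upwards [h, h₁, h₂] with i hi e₁ e₂ using e₁ ▸ e₂ ▸ hi)
  le_refl a := by
    induction a using Quotient.inductionOn with
    | _ a => exact Filter.univ_mem' fun i => le_refl _
  le_trans a b c := by
    induction a using Quotient.inductionOn with
    | _ a => induction b using Quotient.inductionOn with
      | _ b => induction c using Quotient.inductionOn with
        | _ c =>
          intro h₁ h₂
          filter_upwards [h₁, h₂] with i hi1 hi2 using le_trans hi1 hi2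
  le_antisymm a b := by
    induction a using Quotient.inductionOn with
    | _ a => induction b using Quotient.inductionOn with
      | _ b =>
        intro h₁ h₂
        refine Quotient.sound ?_
        filter_upwards [h₁, h₂] with i hi1 hi2 using le_antisymm hi1 hi2


/-- The unary operation induced coordinatewise on the ultraproduct. -/
def uMap {I : Type*} {B : I → Type*} (F : Ultrafilter I) (f : ∀ i, B i → B i) :
    UProd B F → UProd B F :=
  Quotient.map (fun a i => f i (a i)) (by
    intro a b h
    filter_upwards [h] with i hi using congrArg (f i) hi)


section UProdAux

variable {I : Type*} {B : I → Type*} [∀ i, PartialOrder (B i)] {F : Ultrafilter I}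

lemma UProd.le_def (a b : ∀ i, B i) :
    @LE.le (UProd B F) _ (Quotient.mk (uSetoid B F) a) (Quotient.mk (uSetoid B F) b) ↔
      {i | a i ≤ b i} ∈ F :=
  Iff.rfl

omit [∀ i, PartialOrder (B i)] in
lemma uMap_mk (f : ∀ i, B i → B i) (a : ∀ i, B i) :
    uMap F f (Quotient.mk (uSetoid B F) a) = Quotient.mk (uSetoid B F) (fun i => f i (a i)) :=
  rfl

lemma quasiComplete_mono {i : I} (f : ∀ i, B i → B i)
    (hf : ∀ i (X : Set (B i)) (s : B i), X.Nonempty → IsLUB X s → IsLUB (f i '' X) (f i s))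
    {a b : B i} (h : a ≤ b) : f i a ≤ f i b := by
  have h1 : IsLUB {a, b} b := by
    constructor
    · rintro y (rfl | rfl)
      · exact h
      · exact le_rfl
    · intro w hw
      exact hw (by simp)
  have h2 := hf i {a, b} b ⟨a, by simp⟩ h1
  exact h2.1 ⟨a, by simp, rfl⟩

end UProdAux

/-- Ultraproducts of posets preserve quasi-completeness (preservation of suprema of
nonempty sets) of a unary operation. -/
theorem uprod_quasiComplete {I : Type*} (B : I → Type*) [∀ i, PartialOrder (B i)]
    (F : Ultrafilter I) (f : ∀ i, B i → B i)
    (hf : ∀ i (X : Set (B i)) (s : B i), X.Nonempty → IsLUB X s → IsLUB (f i '' X) (f i s)) :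
    ∀ (X : Set (UProd B F)) (s : UProd B F), X.Nonempty → IsLUB X s →
      IsLUB (uMap F f '' X) (uMap F f s) := by

  intro X s hXne hlub
  constructor
  · rintro y ⟨x, hx, rfl⟩
    have hxs : x ≤ s := hlub.1 hx
    rw [← Quotient.out_eq x, ← Quotient.out_eq s] at hxs ⊢
    rw [uMap_mk, uMap_mk, UProd.le_def]
    rw [UProd.le_def] at hxs
    filter_upwards [hxs] with i hi using quasiComplete_mono f hf hi
  · intro u hu
    -- representatives
    set sr := Quotient.out s with hsr
    set ur := Quotient.out u with hur
    have hs : Quotient.mk (uSetoid B F) sr = s := Quotient.out_eq s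
    have hu' : Quotient.mk (uSetoid B F) ur = u := Quotient.out_eq u
    set S : ∀ i, Set (B i) := fun i => {b | b ≤ sr i ∧ f i b ≤ ur i} with hS
    -- every element of X lands in S a.e.
    have hmem : ∀ x ∈ X, {i | Quotient.out x i ∈ S i} ∈ F := by
      intro x hx
      have h1 : x ≤ s := hlub.1 hx
      have h2 : uMap F f x ≤ u := hu ⟨x, hx, rfl⟩
      rw [← Quotient.out_eq x, ← hs, UProd.le_def] at h1
      rw [← Quotient.out_eq x, ← hu', uMap_mk, UProd.le_def] at h2
      filter_upwards [h1, h2] with i hi1 hi2 using ⟨hi1, hi2⟩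
    obtain ⟨x₀, hx₀⟩ := hXne
    have hSne : {i | (S i).Nonempty} ∈ F := by
      filter_upwards [hmem x₀ hx₀] with i hi using ⟨_, hi⟩
    -- a.e., sr i is below every upper bound of S i
    have hkey : {i | ∀ w ∈ upperBounds (S i), sr i ≤ w} ∈ F := by
      by_contra hG
      rw [← Ultrafilter.compl_mem_iff_notMem] at hG
      classical
      set w : ∀ i, B i := fun i =>
        if h : ∃ v ∈ upperBounds (S i), ¬ sr i ≤ v then h.choose else sr i with hw
      have hub : Quotient.mk (uSetoid B F) w ∈ upperBounds X := by
        intro x hx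
        rw [← Quotient.out_eq x, UProd.le_def]
        filter_upwards [hmem x hx] with i hi
        by_cases h : ∃ v ∈ upperBounds (S i), ¬ sr i ≤ v
        · have := h.choose_spec.1
          simp only [hw, dif_pos h]
          exact this hi
        · simp only [hw, dif_neg h]
          exact hi.1
      have hle : s ≤ Quotient.mk (uSetoid B F) w := hlub.2 hub
      rw [← hs, UProd.le_def] at hle
      have : ({i | ∀ w ∈ upperBounds (S i), sr i ≤ w}ᶜ ∩ {i | sr i ≤ w i} : Set I) ∈ F :=
        Filter.inter_mem hG hle
      obtain ⟨i, hi1, hi2⟩ := Filter.nonempty_of_mem this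
      simp only [Set.mem_compl_iff, Set.mem_setOf_eq, not_forall] at hi1
      obtain ⟨v, hv, hnv⟩ := hi1
      have h : ∃ v ∈ upperBounds (S i), ¬ sr i ≤ v := ⟨v, hv, hnv⟩
      have hws := h.choose_spec.2
      simp only [Set.mem_setOf_eq, hw, dif_pos h] at hi2
      exact hws hi2
    -- conclude
    rw [← hs, ← hu', uMap_mk, UProd.le_def]
    filter_upwards [hSne, hkey] with i hne hk
    have hlubS : IsLUB (S i) (sr i) := ⟨fun b hb => hb.1, fun v hv => hk v hv⟩
    have := hf i (S i) (sr i) hne hlubS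
    refine this.2 ?_
    rintro y ⟨b, hb, rfl⟩
    exact hb.2
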